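/- arXiv:1409.3610 — 3 statements merged into one kernel-verified Lean document; each statement's English description precedes it below -/
import Mathlib

section
/- Let d ≥ 1, let ω = (ω_1, …, ω_{2d+1}) be a sequence with values in a finite set S, and let N ⊆ S. Suppose that every even-indexed entry lies in N (ω_{2k} ∈ N for all 1 ≤ k ≤ d), and that ω_1 ∉ N and ω_{2d+1} ∉ N. Then the Laurent monomial x(ω) = (∏_{i odd} x_{ω_i}) · (∏_{i even} x_{ω_i})^{-1} has degree at most −1 with respect to the variables indexed by N. -/
/-!
Summing the exponents over `N` counts the odd positions `i` with `ω i ∈ N` minus the even ones.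
All `d` even positions count, while at most `d - 1` of the `d + 1` odd positions do, since the
two endpoints `1` and `2d + 1` are excluded.
-/

/-- The exponent of the variable `x s` in the Laurent monomial
`x(ω) = (∏_{i odd} x_{ω i}) · (∏_{i even} x_{ω i})⁻¹`, where `i` ranges over `1, …, 2d+1`. -/
def pathExp {S : Type*} [DecidableEq S] (d : ℕ) (ω : ℕ → S) (s : S) : ℤ :=
  (((Finset.Icc 1 (2 * d + 1)).filter fun i => Odd i ∧ ω i = s).card : ℤ) -
  (((Finset.Icc 1 (2 * d + 1)).filter fun i => Even i ∧ ω i = s).card : ℤ)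

open Finset

theorem sum_card_filter_and_eq {S : Type*} [DecidableEq S] (ω : ℕ → S) (N : Finset S)
    (I : Finset ℕ) (P : ℕ → Prop) [DecidablePred P] :
    ∑ s ∈ N, #{i ∈ I | P i ∧ ω i = s} = #{i ∈ I | P i ∧ ω i ∈ N} := by
  rw [card_eq_sum_card_fiberwise (f := ω) (t := N) fun i hi => (mem_filter.1 hi).2.2]
  refine sum_congr rfl fun s hs => congrArg card ?_
  ext i
  simp only [mem_filter]
  constructor
  · rintro ⟨hi, hP, rfl⟩
    exact ⟨⟨hi, hP, hs⟩, rfl⟩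
  · rintro ⟨⟨hi, hP, -⟩, rfl⟩
    exact ⟨hi, hP, rfl⟩

theorem card_filter_odd_le_of_not_endpoints (d : ℕ) (p : ℕ → Prop) [DecidablePred p]
    (hfirst : ¬ p 1) (hlast : ¬ p (2 * d + 1)) :
    #{i ∈ Icc 1 (2 * d + 1) | Odd i ∧ p i} ≤ d - 1 := by
  have hsub : {i ∈ Icc 1 (2 * d + 1) | Odd i ∧ p i} ⊆ (Icc 1 (d - 1)).image (2 * · + 1) := by
    intro i hi
    obtain ⟨hi, ⟨k, rfl⟩, hp⟩ := by simpa only [mem_filter, mem_Icc] using hi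
    have hk0 : k ≠ 0 := by rintro rfl; exact hfirst hp
    have hkd : k ≠ d := by rintro rfl; exact hlast hp
    exact mem_image.2 ⟨k, mem_Icc.2 ⟨by omega, by omega⟩, rfl⟩
  calc #{i ∈ Icc 1 (2 * d + 1) | Odd i ∧ p i}
      ≤ #((Icc 1 (d - 1)).image (2 * · + 1)) := card_le_card hsub
    _ ≤ #(Icc 1 (d - 1)) := card_image_le
    _ = d - 1 := by simp

theorem le_card_filter_even_of_forall (d : ℕ) (p : ℕ → Prop) [DecidablePred p]
    (heven : ∀ k, 1 ≤ k → k ≤ d → p (2 * k)) :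
    d ≤ #{i ∈ Icc 1 (2 * d + 1) | Even i ∧ p i} := by
  have hsub : (Icc 1 d).image (2 * ·) ⊆ {i ∈ Icc 1 (2 * d + 1) | Even i ∧ p i} := by
    intro i hi
    obtain ⟨k, hk, rfl⟩ := mem_image.1 hi
    obtain ⟨hk1, hkd⟩ := mem_Icc.1 hk
    exact mem_filter.2 ⟨mem_Icc.2 ⟨by omega, by omega⟩, even_two_mul k, heven k hk1 hkd⟩
  calc d = #(Icc 1 d) := by simp
    _ = #((Icc 1 d).image (2 * ·)) :=
      (card_image_of_injective _ fun a b h => by simpa using h).symm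
    _ ≤ _ := card_le_card hsub

theorem sum_pathExp_eq {S : Type*} [DecidableEq S] (d : ℕ) (ω : ℕ → S) (N : Finset S) :
    ∑ s ∈ N, pathExp d ω s =
      (#{i ∈ Icc 1 (2 * d + 1) | Odd i ∧ ω i ∈ N} : ℤ) -
        #{i ∈ Icc 1 (2 * d + 1) | Even i ∧ ω i ∈ N} := by
  simp only [pathExp, sum_sub_distrib, ← Nat.cast_sum, sum_card_filter_and_eq]

theorem stmt1_general {S : Type*} [DecidableEq S] (d : ℕ) (hd : 1 ≤ d)
    (ω : ℕ → S) (N : Finset S)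
    (heven : ∀ k, 1 ≤ k → k ≤ d → ω (2 * k) ∈ N)
    (hfirst : ω 1 ∉ N) (hlast : ω (2 * d + 1) ∉ N) :
    (∑ s ∈ N, pathExp d ω s) ≤ -1 := by
  have hcardOdd := card_filter_odd_le_of_not_endpoints d (ω · ∈ N) hfirst hlast
  have hcardEven := le_card_filter_even_of_forall d (ω · ∈ N) heven
  rw [sum_pathExp_eq]
  omega

theorem stmt1 {S : Type*} [Fintype S] [DecidableEq S] (d : ℕ) (hd : 1 ≤ d)
    (ω : ℕ → S) (N : Finset S)
    (heven : ∀ k, 1 ≤ k → k ≤ d → ω (2 * k) ∈ N)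
    (hfirst : ω 1 ∉ N) (hlast : ω (2 * d + 1) ∉ N) :
    (∑ s ∈ N, pathExp d ω s) ≤ -1 :=
  stmt1_general d hd ω N heven hfirst hlast
end

section
/- Let d ≥ 1, let ω = (ω_1, …, ω_{2d+1}) be a sequence in a set S, and let N ⊆ S. Suppose that for every odd index i with ω_i ∈ N, at least one neighbor entry ω_{i−1} or ω_{i+1} (whichever exists) lies in N. If #{odd i : ω_i ∈ N} > #{even i : ω_i ∈ N}, then there exist odd indices a ≤ b with b ≥ a + 2 such that ω_k ∈ N for all a ≤ k ≤ b, and moreover ω_{a−1} ∉ N (if a > 1) and ω_{b+1} ∉ N (if b < 2d+1); that is, ω contains a maximal N-run of odd length at least 3 beginning and ending at odd indices. -/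
/-!
Pair each odd position `i` carrying `P` with an even neighbour carrying `P`: with `i + 1` when
the maximal `P`-run through `i` starts at an odd position, with `i - 1` otherwise. Two odd
positions of one run never share a partner, so the pairing is injective. If it fails to stay
inside the run, then `i` is the odd last position of a run with odd first position; that run
has length at least `3`, because a run of length `1` at an odd position is excluded by the
neighbour hypothesis.
-/

section Runs

open scoped Classical

variable (P : ℕ → Prop)

/-- For `0 < i`, the least `a ≥ 1` such that `P` holds on `[a, i)`; the guard `0 < i` keeps runs
inside the positions `{1, 2, …}`. -/
noncomputable def runStart : ℕ → ℕ
  | 0 => 0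
  | i + 1 => if 0 < i ∧ P i then runStart i else i + 1

variable {P}

theorem runStart_succ {i : ℕ} (hi : 0 < i) (h : P i) : runStart P (i + 1) = runStart P i := by
  simp [runStart, hi, h]

theorem runStart_pos {i : ℕ} (hi : 0 < i) : 0 < runStart P i := by
  induction i with
  | zero => omega
  | succ i ih =>
    simp only [runStart]
    split_ifs with h
    exacts [ih h.1, i.succ_pos]

theorem runStart_le (i : ℕ) : runStart P i ≤ i := by
  induction i with
  | zero => rfl
  | succ i ih =>
    simp only [runStart]
    split_ifs
    exacts [ih.trans i.le_succ, le_rfl]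

theorem pred_of_runStart_le {i k : ℕ} (hk : runStart P i ≤ k) (hki : k < i) : P k := by
  induction i with
  | zero => omega
  | succ i ih =>
    simp only [runStart] at hk
    split_ifs at hk with h
    · rcases Nat.lt_succ_iff_lt_or_eq.mp hki with hki | rfl
      exacts [ih hk hki, h.2]
    · omega

theorem not_pred_runStart_sub_one {i : ℕ} (h : 1 < runStart P i) : ¬P (runStart P i - 1) := by
  induction i with
  | zero => simp [runStart] at h
  | succ i ih =>
    simp only [runStart] at h ⊢
    split_ifs at h ⊢ with hi
    · exact ih h
    · simpa [show 0 < i by omega] using hi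

variable (P)

noncomputable def runPartner (i : ℕ) : ℕ := if Odd (runStart P i) then i + 1 else i - 1

variable {P}

theorem runPartner_injOn :
    Set.InjOn (runPartner P) {i | Odd i ∧ P i ∧ P (runPartner P i)} := by
  -- If `i + 1 = j - 1`, then `i, i + 1, j` lie in one run, so `i` and `j` have the same start.
  have same_start {i j : ℕ} (hi : Odd i) (hPi : P i) (hPi' : P (i + 1)) (hj : j = i + 2) :
      runStart P j = runStart P i := by
    subst hj
    rw [runStart_succ (by omega) hPi', runStart_succ hi.pos hPi]
  rintro i ⟨hi, hPi, hPi'⟩ j ⟨hj, hPj, hPj'⟩ hij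
  obtain ⟨i, rfl⟩ := hi
  obtain ⟨j, rfl⟩ := hj
  unfold runPartner at hij hPi' hPj'
  split_ifs at hij hPi' hPj' with hsi hsj hsj
  · omega
  · exact absurd (same_start (j := 2 * j + 1) ⟨i, rfl⟩ hPi hPi' (by omega) ▸ hsi) hsj
  · exact absurd (same_start (j := 2 * i + 1) ⟨j, rfl⟩ hPj hPj' (by omega) ▸ hsj) hsi
  · omega

theorem card_odd_le_card_even (n : ℕ)
    (hpartner : ∀ i, 1 ≤ i → i ≤ n → Odd i → P i →
      1 ≤ runPartner P i ∧ runPartner P i ≤ n ∧ P (runPartner P i)) :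
    ((Finset.Icc 1 n).filter fun i => Odd i ∧ P i).card ≤
      ((Finset.Icc 1 n).filter fun i => Even i ∧ P i).card := by
  refine Finset.card_le_card_of_injOn (runPartner P) (fun i hi => ?_) fun i hi j hj hij => ?_
  · simp only [Finset.coe_filter, Finset.mem_Icc, Set.mem_ofPred_eq] at hi ⊢
    obtain ⟨⟨hi1, hin⟩, hodd, hPi⟩ := hi
    obtain ⟨h1, hn, hP⟩ := hpartner i hi1 hin hodd hPi
    refine ⟨⟨h1, hn⟩, ?_, hP⟩
    unfold runPartner
    split_ifs
    exacts [hodd.add_one, Nat.Odd.sub_odd hodd odd_one]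
  · simp only [Finset.coe_filter, Finset.mem_Icc, Set.mem_ofPred_eq] at hi hj
    exact runPartner_injOn ⟨hi.2.1, hi.2.2, (hpartner i hi.1.1 hi.1.2 hi.2.1 hi.2.2).2.2⟩
      ⟨hj.2.1, hj.2.2, (hpartner j hj.1.1 hj.1.2 hj.2.1 hj.2.2).2.2⟩ hij

theorem lt_and_pred_succ_of_odd_runStart {n i : ℕ}
    (hnbr : ∀ i, 1 ≤ i → i ≤ n → Odd i → P i → (1 < i ∧ P (i - 1)) ∨ (i < n ∧ P (i + 1)))
    (hrun : ∀ a b, Odd a → Odd b → 1 ≤ a → b ≤ n → a + 2 ≤ b → (∀ k, a ≤ k → k ≤ b → P k) →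
      (1 < a → ¬P (a - 1)) → b < n ∧ P (b + 1))
    (hi1 : 1 ≤ i) (hin : i ≤ n) (hi : Odd i) (hPi : P i) (hs : Odd (runStart P i)) :
    i < n ∧ P (i + 1) := by
  have hle := runStart_le (P := P) i
  have hstart : ∀ k, runStart P i ≤ k → k ≤ i → P k := fun k hk hki =>
    (Nat.lt_or_eq_of_le hki).elim (pred_of_runStart_le hk) (· ▸ hPi)
  by_cases hlong : runStart P i + 2 ≤ i
  · exact hrun _ i hs hi (runStart_pos hi1) hin hlong hstart fun h => not_pred_runStart_sub_one h
  · -- both ends are odd, so the run is the single position `i`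
    obtain ⟨s, hs_eq⟩ := hs
    obtain ⟨j, rfl⟩ := hi
    have heq : runStart P (2 * j + 1) = 2 * j + 1 := by omega
    refine (hnbr _ hi1 hin ⟨j, rfl⟩ hPi).resolve_left fun ⟨h1, hP⟩ => ?_
    have hisolated := not_pred_runStart_sub_one (P := P) (i := 2 * j + 1) (by omega)
    rw [heq] at hisolated
    exact hisolated hP

theorem one_lt_and_pred_pred_of_even_runStart {i : ℕ} (hi1 : 1 ≤ i) (hi : Odd i)
    (hs : ¬Odd (runStart P i)) : 1 < i ∧ P (i - 1) := by
  have hlt : runStart P i < i := (runStart_le (P := P) i).lt_of_ne fun h => hs (h.symm ▸ hi)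
  have hpos := runStart_pos (P := P) (i := i) hi1
  exact ⟨by omega, pred_of_runStart_le (i := i) (by omega) (by omega)⟩

theorem exists_odd_maximal_run_of_card_even_lt_card_odd (n : ℕ)
    (hnbr : ∀ i, 1 ≤ i → i ≤ n → Odd i → P i → (1 < i ∧ P (i - 1)) ∨ (i < n ∧ P (i + 1)))
    (hcard : ((Finset.Icc 1 n).filter fun i => Even i ∧ P i).card <
      ((Finset.Icc 1 n).filter fun i => Odd i ∧ P i).card) :
    ∃ a b, Odd a ∧ Odd b ∧ 1 ≤ a ∧ b ≤ n ∧ a + 2 ≤ b ∧ (∀ k, a ≤ k → k ≤ b → P k) ∧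
      (1 < a → ¬P (a - 1)) ∧ (b < n → ¬P (b + 1)) := by
  by_contra! hrun
  refine hcard.not_ge (card_odd_le_card_even n fun i hi1 hin hi hPi => ?_)
  unfold runPartner
  split_ifs with hs
  · obtain ⟨hlt, hP⟩ := lt_and_pred_succ_of_odd_runStart hnbr hrun hi1 hin hi hPi hs
    exact ⟨by omega, hlt, hP⟩
  · obtain ⟨hlt, hP⟩ := one_lt_and_pred_pred_of_even_runStart hi1 hi hs
    exact ⟨by omega, by omega, hP⟩

end Runs

open scoped Classical in
theorem stmt4_general {S : Type*} (d : ℕ) (ω : ℕ → S) (N : Set S)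
    (hnbr : ∀ i, 1 ≤ i → i ≤ 2 * d + 1 → Odd i → ω i ∈ N →
      (1 < i ∧ ω (i - 1) ∈ N) ∨ (i < 2 * d + 1 ∧ ω (i + 1) ∈ N))
    (hcard : (((Finset.Icc 1 (2 * d + 1)).filter fun i => Even i ∧ ω i ∈ N).card <
      ((Finset.Icc 1 (2 * d + 1)).filter fun i => Odd i ∧ ω i ∈ N).card)) :
    ∃ a b, Odd a ∧ Odd b ∧ 1 ≤ a ∧ b ≤ 2 * d + 1 ∧ a + 2 ≤ b ∧
      (∀ k, a ≤ k → k ≤ b → ω k ∈ N) ∧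
      (1 < a → ω (a - 1) ∉ N) ∧ (b < 2 * d + 1 → ω (b + 1) ∉ N) :=
  exists_odd_maximal_run_of_card_even_lt_card_odd (2 * d + 1) hnbr hcard

open scoped Classical in
/-- If every odd-indexed `N`-entry of `ω = (ω_1,…,ω_{2d+1})` has a neighbor in `N`, and
there are strictly more odd-indexed than even-indexed entries in `N`, then `ω` contains a
maximal `N`-run of odd length at least `3` beginning and ending at odd indices. -/
theorem stmt4 {S : Type*} (d : ℕ) (hd : 1 ≤ d) (ω : ℕ → S) (N : Set S)
    (hnbr : ∀ i, 1 ≤ i → i ≤ 2 * d + 1 → Odd i → ω i ∈ N →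
      (1 < i ∧ ω (i - 1) ∈ N) ∨ (i < 2 * d + 1 ∧ ω (i + 1) ∈ N))
    (hcard : (((Finset.Icc 1 (2 * d + 1)).filter fun i => Even i ∧ ω i ∈ N).card <
      ((Finset.Icc 1 (2 * d + 1)).filter fun i => Odd i ∧ ω i ∈ N).card)) :
    ∃ a b, Odd a ∧ Odd b ∧ 1 ≤ a ∧ b ≤ 2 * d + 1 ∧ a + 2 ≤ b ∧
      (∀ k, a ≤ k → k ≤ b → ω k ∈ N) ∧
      (1 < a → ω (a - 1) ∉ N) ∧ (b < 2 * d + 1 → ω (b + 1) ∉ N) :=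
  stmt4_general d ω N hnbr hcard
end

section
/- Let A be a free ℤ-module with basis B, let R = ℤ[x_1^{±1}, …, x_n^{±1}], and let φ : A → R be an additive (ℤ-linear) map. Fix Γ ∈ B and suppose: (i) φ(Γ) is a single Laurent monomial with all exponents nonnegative and coefficient 1; (ii) for every Σ ∈ B with Σ ≠ Γ appearing in the support of a given element y, φ(Σ) is a ℤ-linear combination of proper Laurent monomials (monomials having at least one negative exponent). If y = Σ_{Σ ∈ B} m_Σ Σ (finite support) and all coefficients of the Laurent polynomial φ(y) are nonnegative, then m_Γ ≥ 0. -/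
/-!
Expanding `y` in the basis, the coefficient of the monomial `x^a` of `φ(Γ)` in `φ(y)` receives
contributions only from `Γ`: every other `φ(σ)` is supported on exponent vectors with a negative
entry, while `a ≥ 0`. Hence this coefficient equals `m_Γ`, and it is nonnegative by assumption.
-/

theorem Module.Basis.addMonoidHom_apply_eq_sum_repr {A B M : Type*} [AddCommGroup A]
    [AddCommGroup M] (b : Module.Basis B ℤ A) (φ : A →+ M) (y : A) :
    φ y = (b.repr y).sum fun σ c => c • φ (b σ) := by
  conv_lhs => rw [← b.linearCombination_repr y, Finsupp.linearCombination_apply]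
  simp only [Finsupp.sum, map_sum, map_zsmul]

theorem Module.Basis.addMonoidHom_apply_eq_repr_of_single {A B ι : Type*} [AddCommGroup A]
    (b : Module.Basis B ℤ A) (φ : A →+ (ι →₀ ℤ)) (Γ : B) (y : A) (a : ι)
    (hΓ : φ (b Γ) = Finsupp.single a 1)
    (hother : ∀ σ, σ ≠ Γ → b.repr y σ ≠ 0 → a ∉ (φ (b σ)).support) :
    φ y a = b.repr y Γ := by
  rw [b.addMonoidHom_apply_eq_sum_repr φ y, Finsupp.sum, Finset.sum_apply',
    Finset.sum_eq_single Γ]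
  · simp [hΓ]
  · intro σ hσ hne
    simp [Finsupp.notMem_support_iff.mp (hother σ hne (Finsupp.mem_support_iff.mp hσ))]
  · intro hΓy
    simp [Finsupp.notMem_support_iff.mp hΓy]

/-- Abstraction of the proof of Theorem 5.7: `φ` is the `T`-expansion map into the Laurent
polynomial ring `ℤ[x₁^{±1},…,x_n^{±1}]` (represented by finitely supported functions from
exponent vectors to coefficients).  If `φ(Γ)` is a single Laurent monomial with nonnegative
exponents and coefficient `1`, and for every other basis element `σ` in the support of `y`
the expansion `φ(σ)` is a `ℤ`-linear combination of proper Laurent monomials, then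
nonnegativity of all coefficients of `φ(y)` forces the coefficient of `Γ` in `y`
to be nonnegative. -/
theorem stmt6 {A : Type*} [AddCommGroup A] {B : Type*} (b : Module.Basis B ℤ A) (n : ℕ)
    (φ : A →+ ((Fin n → ℤ) →₀ ℤ)) (Γ : B) (y : A)
    (a : Fin n → ℤ) (ha : ∀ i, 0 ≤ a i)
    (hΓ : φ (b Γ) = Finsupp.single a 1)
    (hproper : ∀ σ : B, σ ≠ Γ → b.repr y σ ≠ 0 →
      ∀ v ∈ (φ (b σ)).support, ∃ i, v i < 0)
    (hy : ∀ v, 0 ≤ φ y v) :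
    0 ≤ b.repr y Γ := by
  have ha_notMem : ∀ σ, σ ≠ Γ → b.repr y σ ≠ 0 → a ∉ (φ (b σ)).support := by
    intro σ hσ hyσ haσ
    obtain ⟨i, hi⟩ := hproper σ hσ hyσ a haσ
    exact (ha i).not_gt hi
  rw [← b.addMonoidHom_apply_eq_repr_of_single φ Γ y a hΓ ha_notMem]
  exact hy a
end
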